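/- For the 1→2 optimal cloning channel output ρ = (1/3)(I₃ + ∑_i n_i J_i^{(3)}) on the symmetric two-qubit subspace, the reduced single-qubit state of either clone equals (2/3)|φ⟩⟨φ| + (1/3)(I₂/2), and hence the fidelity ⟨φ|ρ_clone|φ⟩ of each clone with the pure input qubit |φ⟩ (with unit Bloch vector n) equals 5/6. -/

import Mathlib

/-! Conjugating by `symEmbed` and tracing out one qubit is a linear map `ℂ³ˣ³ → ℂ²ˣ²` sending
`1 ↦ (3/2) • 1` and the spin-1 generators `J_i` to the Pauli matrices `σ_i`. Hence a clone's
reduced state is `1/2 + (1/3) n·σ`. Since `|φ⟩⟨φ| = (1 + n·σ)/2` for a unit vector `φ`, this is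
`(2/3)|φ⟩⟨φ| + (1/6) • 1`, whose expectation value in `φ` is `2/3 + 1/6`. -/

open Matrix

/-- Isometric identification of `ℂ³` with the symmetric subspace of `ℂ² ⊗ ℂ²`:
`|0⟩ ↦ |00⟩`, `|1⟩ ↦ (|01⟩ + |10⟩)/√2`, `|2⟩ ↦ |11⟩`. -/
noncomputable def symEmbed : Matrix (Fin 2 × Fin 2) (Fin 3) ℂ :=
  Matrix.of fun p k =>
    if k = 0 then (if p = (0, 0) then 1 else 0)
    else if k = 1 then (if p = (0, 1) ∨ p = (1, 0) then ((1 / Real.sqrt 2 : ℝ) : ℂ) else 0)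
    else (if p = (1, 1) then 1 else 0)

/-- Spin-1 representation matrices of `su(2)`. -/
noncomputable def J1x : Matrix (Fin 3) (Fin 3) ℂ :=
  ((Real.sqrt 2 : ℂ))⁻¹ • !![0, 1, 0; 1, 0, 1; 0, 1, 0]

noncomputable def J1y : Matrix (Fin 3) (Fin 3) ℂ :=
  ((Real.sqrt 2 : ℂ))⁻¹ •
    !![0, -Complex.I, 0; Complex.I, 0, -Complex.I; 0, Complex.I, 0]

noncomputable def J1z : Matrix (Fin 3) (Fin 3) ℂ := !![1, 0, 0; 0, 0, 0; 0, 0, -1]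

namespace Matrix

variable {m n R : Type*} [Fintype n]

def traceRight [CommSemiring R] : Matrix (m × n) (m × n) R →ₗ[R] Matrix m m R where
  toFun M := of fun i j => ∑ k, M (i, k) (j, k)
  map_add' M N := by ext; simp [Finset.sum_add_distrib]
  map_smul' c M := by ext; simp [Finset.mul_sum]

@[simp]
lemma traceRight_apply [CommSemiring R] (M : Matrix (m × n) (m × n) R) (i j : m) :
    traceRight M i j = ∑ k, M (i, k) (j, k) := rfl

lemma star_dotProduct_smul_vecMulVec_add_smul_one_mulVec [DecidableEq n] [CommSemiring R]
    [StarRing R] {φ : n → R} (hφ : star φ ⬝ᵥ φ = 1) (a b : R) :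
    star φ ⬝ᵥ (a • vecMulVec φ (star φ) + b • 1) *ᵥ φ = a + b := by
  simp [add_mulVec, smul_mulVec, vecMulVec_mulVec, dotProduct_add, dotProduct_smul, hφ]

end Matrix

def pauliX : Matrix (Fin 2) (Fin 2) ℂ := !![0, 1; 1, 0]

def pauliY : Matrix (Fin 2) (Fin 2) ℂ := !![0, -Complex.I; Complex.I, 0]

def pauliZ : Matrix (Fin 2) (Fin 2) ℂ := !![1, 0; 0, -1]

open ComplexConjugate in
lemma vecMulVec_star_self_eq_pauli (φ : Fin 2 → ℂ) (hφ : ‖φ 0‖ ^ 2 + ‖φ 1‖ ^ 2 = 1) :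
    vecMulVec φ (star φ) = (1 / 2 : ℂ) • (1
      + (star (φ 0) * φ 1 + φ 0 * star (φ 1)) • pauliX
      + (Complex.I * (-(star (φ 0)) * φ 1 + φ 0 * star (φ 1))) • pauliY
      + (((‖φ 0‖ ^ 2 : ℝ) : ℂ) - ((‖φ 1‖ ^ 2 : ℝ) : ℂ)) • pauliZ) := by
  have hnorm : φ 0 * conj (φ 0) + φ 1 * conj (φ 1) = 1 := by
    simp only [Complex.mul_conj']
    exact_mod_cast hφ
  push_cast [← Complex.mul_conj']
  ext i j
  fin_cases i <;> fin_cases j <;>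
    simp [vecMulVec_apply, pauliX, pauliY, pauliZ, one_apply] <;>
    first
      | linear_combination (1 / 2 : ℂ) * hnorm
      | ring_nf; simp only [Complex.I_sq]; ring

lemma Complex.ofReal_sqrt_two_sq : ((Real.sqrt 2 : ℝ) : ℂ) ^ 2 = 2 := by
  rw [← Complex.ofReal_pow, Real.sq_sqrt zero_le_two, Complex.ofReal_ofNat]

lemma traceRight_symEmbed_conj (M : Matrix (Fin 3) (Fin 3) ℂ) :
    traceRight (symEmbed * M * symEmbedᴴ) =
      !![M 0 0 + M 1 1 / 2, (M 0 1 + M 1 2) / Real.sqrt 2;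
         (M 1 0 + M 2 1) / Real.sqrt 2, M 1 1 / 2 + M 2 2] := by
  ext i j
  fin_cases i <;> fin_cases j <;>
    simp only [traceRight_apply, mul_apply, Fin.sum_univ_three, Fin.sum_univ_two,
      symEmbed, conjTranspose_apply, of_apply] <;>
    norm_num [Prod.ext_iff, Fin.ext_iff] <;>
    field_simp <;>
    linear_combination -M 1 1 * Complex.ofReal_sqrt_two_sq

lemma traceRight_symEmbed_conj_one :
    traceRight (symEmbed * (1 : Matrix (Fin 3) (Fin 3) ℂ) * symEmbedᴴ) = (3 / 2 : ℂ) • 1 := by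
  rw [traceRight_symEmbed_conj]
  ext i j; fin_cases i <;> fin_cases j <;> norm_num [one_apply, Fin.ext_iff]

lemma traceRight_symEmbed_conj_J1x : traceRight (symEmbed * J1x * symEmbedᴴ) = pauliX := by
  rw [traceRight_symEmbed_conj]
  ext i j; fin_cases i <;> fin_cases j <;> simp [J1x, pauliX] <;> field_simp <;>
    simp only [Complex.ofReal_sqrt_two_sq] <;> ring

lemma traceRight_symEmbed_conj_J1y : traceRight (symEmbed * J1y * symEmbedᴴ) = pauliY := by
  rw [traceRight_symEmbed_conj]
  ext i j; fin_cases i <;> fin_cases j <;> simp [J1y, pauliY] <;> field_simp <;>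
    simp only [Complex.ofReal_sqrt_two_sq] <;> ring

lemma traceRight_symEmbed_conj_J1z : traceRight (symEmbed * J1z * symEmbedᴴ) = pauliZ := by
  rw [traceRight_symEmbed_conj]
  ext i j; fin_cases i <;> fin_cases j <;> simp [J1z, pauliZ]

lemma traceRight_symEmbed_conj_spinOne (x y z : ℂ) :
    traceRight (symEmbed * ((1 / 3 : ℂ) • (1 + x • J1x + y • J1y + z • J1z)) * symEmbedᴴ) =
      (1 / 2 : ℂ) • 1 + (1 / 3 : ℂ) • (x • pauliX + y • pauliY + z • pauliZ) := by
  simp only [Matrix.mul_add, Matrix.add_mul, Matrix.mul_smul, Matrix.smul_mul, map_add,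
    map_smul, traceRight_symEmbed_conj_one, traceRight_symEmbed_conj_J1x,
    traceRight_symEmbed_conj_J1y, traceRight_symEmbed_conj_J1z]
  module

/-- For the `1→2` optimal cloning channel output `ρ = (1/3)(I₃ + ∑ n_i J_i)` on the
symmetric two-qubit subspace (with `n` the Bloch vector of the pure input qubit `φ`),
the reduced state of either clone equals `(2/3)|φ⟩⟨φ| + (1/3)(I₂/2)`, hence each clone
has fidelity `⟨φ|ρ_clone|φ⟩ = 5/6` with the input. -/
theorem cloning_fidelity_five_sixths (φ : Fin 2 → ℂ)
    (hφ : ‖φ 0‖ ^ 2 + ‖φ 1‖ ^ 2 = 1) :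
    let nx : ℂ := star (φ 0) * φ 1 + φ 0 * star (φ 1)
    let ny : ℂ := Complex.I * (-(star (φ 0)) * φ 1 + φ 0 * star (φ 1))
    let nz : ℂ := ((‖φ 0‖ ^ 2 : ℝ) : ℂ) - ((‖φ 1‖ ^ 2 : ℝ) : ℂ)
    let ρ : Matrix (Fin 3) (Fin 3) ℂ :=
      ((1 : ℂ) / 3) • ((1 : Matrix (Fin 3) (Fin 3) ℂ) + nx • J1x + ny • J1y + nz • J1z)
    let ρ2 : Matrix (Fin 2 × Fin 2) (Fin 2 × Fin 2) ℂ := symEmbed * ρ * symEmbedᴴ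
    let ρclone : Matrix (Fin 2) (Fin 2) ℂ := Matrix.of fun i j => ∑ k, ρ2 (i, k) (j, k)
    ρclone = ((2 : ℂ) / 3) • Matrix.of (fun i j => φ i * star (φ j)) +
        ((1 : ℂ) / 6) • (1 : Matrix (Fin 2) (Fin 2) ℂ) ∧
      ∑ i, ∑ j, star (φ i) * ρclone i j * φ j = 5 / 6 := by
  intro nx ny nz ρ ρ2 ρclone
  have hclone :
      ρclone = (1 / 2 : ℂ) • 1 + (1 / 3 : ℂ) • (nx • pauliX + ny • pauliY + nz • pauliZ) :=
    traceRight_symEmbed_conj_spinOne nx ny nz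
  have hpure :
      vecMulVec φ (star φ) = (1 / 2 : ℂ) • (1 + nx • pauliX + ny • pauliY + nz • pauliZ) :=
    vecMulVec_star_self_eq_pauli φ hφ
  have hstate : ρclone = (2 / 3 : ℂ) • vecMulVec φ (star φ) + (1 / 6 : ℂ) • 1 := by
    rw [hclone, hpure]
    module
  have hunit : star φ ⬝ᵥ φ = 1 := by
    simp only [dotProduct, Fin.sum_univ_two, Pi.star_apply, Complex.star_def, Complex.conj_mul']
    exact_mod_cast hφ
  refine ⟨hstate, ?_⟩
  calc ∑ i, ∑ j, star (φ i) * ρclone i j * φ j = star φ ⬝ᵥ ρclone *ᵥ φ := by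
        simp only [dotProduct, mulVec, Finset.mul_sum, Pi.star_apply, mul_assoc]
    _ = 2 / 3 + 1 / 6 := by
        rw [hstate]
        exact star_dotProduct_smul_vecMulVec_add_smul_one_mulVec hunit _ _
    _ = 5 / 6 := by norm_num
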